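/- arXiv:1202.4015 — 2 statements merged into one kernel-verified Lean document; each statement's English description precedes it below -/
import Mathlib

section
/- The circular descent number is constant on double cosets C\W/C: for all w ∈ W and c, c' ∈ C, cdes(c w c') = cdes(w). -/
open RealInnerProductSpace
open scoped Classical

/-- The circular descent number is constant on the double cosets `C \ W / C`:
for all `w ∈ W` and `c, c' ∈ C`, `cdes (c * w * c') = cdes w`. -/
theorem stmt_10 {V : Type*} [NormedAddCommGroup V] [InnerProductSpace ℝ V]
    (r : ℕ) (Φ : Set V) (hne : ∀ γ ∈ Φ, γ ≠ 0)
    (hrefl : ∀ γ ∈ Φ, ∀ δ ∈ Φ, δ - (2 * ⟪δ, γ⟫ / ⟪γ, γ⟫) • γ ∈ Φ)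
    (α : Fin r → V) (hα : ∀ i, α i ∈ Φ) (hlin : LinearIndependent ℝ α)
    (hsimple : ∀ δ ∈ Φ, ∃ c : Fin r → ℤ,
      δ = ∑ i, (c i : ℝ) • α i ∧ ((∀ i, 0 ≤ c i) ∨ (∀ i, c i ≤ 0)))
    (θ : V) (hθ : θ ∈ Φ) (a : Fin r → ℕ) (ha : ∀ i, 0 < a i)
    (hθa : θ = ∑ i, (a i : ℝ) • α i)
    (hhigh : ∀ δ ∈ Φ, ∀ c : Fin r → ℤ, δ = ∑ i, (c i : ℝ) • α i → ∀ i, c i ≤ (a i : ℤ))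
    -- the extended system α_0 = -θ, α_1, …, α_r and marks a_0 = 1, a_1, …, a_r
    (A : Fin (r + 1) → V) (hA0 : A 0 = -θ) (hAs : ∀ i : Fin r, A i.succ = α i)
    (b : Fin (r + 1) → ℕ) (hb0 : b 0 = 1) (hbs : ∀ i : Fin r, b i.succ = a i)
    -- negative vectors
    (IsNeg : V → Prop)
    (hIsNeg : ∀ v, IsNeg v ↔ (v ≠ 0 ∧ ∃ c : Fin r → ℤ, (∀ i, c i ≤ 0) ∧
      v = ∑ i, (c i : ℝ) • α i))
    -- the Weyl group and the subgroup C
    (W : Subgroup (V ≃ₗ[ℝ] V))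
    (hW : W = Subgroup.closure
      {f | ∃ γ ∈ Φ, ∀ v, f v = v - (2 * ⟪v, γ⟫ / ⟪γ, γ⟫) • γ})
    (Cset : Set (V ≃ₗ[ℝ] V))
    (hC : Cset = {u | u ∈ W ∧ (u : V → V) '' Set.range A = Set.range A})
    -- circular descent number
    (cdes : (V ≃ₗ[ℝ] V) → ℕ)
    (hcdes : ∀ u, cdes u = ∑ i, if IsNeg (u (A i)) then b i else 0)
    (w : V ≃ₗ[ℝ] V) (hw : w ∈ W) (c c' : V ≃ₗ[ℝ] V) (hc : c ∈ Cset) (hc' : c' ∈ Cset) :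
    cdes (c * w * c') = cdes w := by
  classical
  -- inner products of roots with themselves are nonzero
  have hip : ∀ γ ∈ Φ, ⟪γ, γ⟫ ≠ 0 := fun γ hγ => inner_self_ne_zero.2 (hne γ hγ)
  -- Φ is closed under negation
  have hnegmem : ∀ δ ∈ Φ, -δ ∈ Φ := by
    intro δ hδ
    have h := hrefl δ hδ δ hδ
    have e2 : 2 * ⟪δ, δ⟫ / ⟪δ, δ⟫ = 2 := by
      rw [mul_div_assoc, div_self (hip δ hδ), mul_one]
    rw [e2, two_smul] at h
    have e3 : δ - (δ + δ) = -δ := by abel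
    rwa [e3] at h
  -- W stabilizes Φ
  have hWΦ : ∀ g : V ≃ₗ[ℝ] V, g ∈ W → ∀ δ ∈ Φ, g δ ∈ Φ := by
    have key : ∀ g ∈ Subgroup.closure
        {f : V ≃ₗ[ℝ] V | ∃ γ ∈ Φ, ∀ v, f v = v - (2 * ⟪v, γ⟫ / ⟪γ, γ⟫) • γ},
        (∀ δ ∈ Φ, g δ ∈ Φ) ∧ (∀ δ ∈ Φ, g⁻¹ δ ∈ Φ) := by
      intro g hg
      induction hg using Subgroup.closure_induction with
      | mem f hf =>
        obtain ⟨γ, hγ, hfv⟩ := hf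
        have hff : ∀ v, f (f v) = v := by
          intro v
          have hin : ⟪v - (2 * ⟪v, γ⟫ / ⟪γ, γ⟫) • γ, γ⟫ = -⟪v, γ⟫ := by
            rw [inner_sub_left, real_inner_smul_left, div_mul_cancel₀ _ (hip γ hγ)]
            ring
          rw [hfv v, hfv _, hin]
          have e4 : 2 * -⟪v, γ⟫ / ⟪γ, γ⟫ = -(2 * ⟪v, γ⟫ / ⟪γ, γ⟫) := by ring
          rw [e4, neg_smul, sub_neg_eq_add, sub_add_cancel]
        have hfinv : f⁻¹ = f := by
          have : f * f = 1 := by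
            apply LinearEquiv.toLinearMap_injective
            ext v
            simpa using hff v
          exact inv_eq_of_mul_eq_one_left this
        constructor
        · intro δ hδ; rw [hfv δ]; exact hrefl γ hγ δ hδ
        · intro δ hδ; rw [hfinv, hfv δ]; exact hrefl γ hγ δ hδ
      | one => exact ⟨fun δ hδ => by simpa using hδ, fun δ hδ => by simpa using hδ⟩
      | mul x y hx hy ihx ihy =>
        refine ⟨fun δ hδ => ihx.1 _ (ihy.1 δ hδ), fun δ hδ => ?_⟩
        rw [mul_inv_rev]
        exact ihy.2 _ (ihx.2 δ hδ)
      | inv x hx ihx => exact ⟨ihx.2, by simpa using ihx.1⟩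
    intro g hg
    rw [hW] at hg
    exact (key g hg).1
  -- uniqueness of coefficients
  have huniqR : ∀ cr dr : Fin r → ℝ, ∑ i, cr i • α i = ∑ i, dr i • α i → cr = dr := by
    intro cr dr h
    have h0 : ∑ i, (cr i - dr i) • α i = 0 := by
      simp only [sub_smul, Finset.sum_sub_distrib, h, sub_self]
    have hz := Fintype.linearIndependent_iff.1 hlin _ h0
    funext i
    have := hz i
    linarith
  have huniqZ : ∀ cz dz : Fin r → ℤ, (∑ i, (cz i : ℝ) • α i = ∑ i, (dz i : ℝ) • α i) →
      cz = dz := by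
    intro cz dz h
    have := huniqR (fun i => (cz i : ℝ)) (fun i => (dz i : ℝ)) h
    funext i
    exact_mod_cast congrFun this i
  -- the coefficient function
  set Rep : V → Prop := fun v => ∃ z : Fin r → ℤ, v = ∑ i, (z i : ℝ) • α i with hRepdef
  set Zc : V → Fin r → ℤ := fun v => if h : Rep v then h.choose else 0 with hZcdef
  have hZspec : ∀ v, Rep v → v = ∑ i, (Zc v i : ℝ) • α i := by
    intro v h
    rw [hZcdef]
    simp only [dif_pos h]
    exact h.choose_spec
  have hZeq : ∀ (v : V) (z : Fin r → ℤ), v = ∑ i, (z i : ℝ) • α i → Zc v = z := by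
    intro v z h
    refine huniqZ _ _ ?_
    rw [← hZspec v ⟨z, h⟩, ← h]
  have hRep : ∀ δ ∈ Φ, Rep δ := by
    intro δ hδ
    obtain ⟨z, h1, -⟩ := hsimple δ hδ
    exact ⟨z, h1⟩
  have hdich : ∀ δ ∈ Φ, (∀ i, 0 ≤ Zc δ i) ∨ (∀ i, Zc δ i ≤ 0) := by
    intro δ hδ
    obtain ⟨z, h1, h2⟩ := hsimple δ hδ
    rw [hZeq δ z h1]
    exact h2
  have hZne : ∀ δ ∈ Φ, Zc δ ≠ 0 := by
    intro δ hδ h0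
    apply hne δ hδ
    have h1 := hZspec δ (hRep δ hδ)
    rw [h0] at h1
    simpa using h1
  have hNegIff : ∀ δ ∈ Φ, (IsNeg δ ↔ ∀ i, Zc δ i ≤ 0) := by
    intro δ hδ
    rw [hIsNeg]
    constructor
    · rintro ⟨-, z, hz, hzr⟩ i
      rw [hZeq δ z hzr]
      exact hz i
    · intro h
      exact ⟨hne δ hδ, Zc δ, h, hZspec δ (hRep δ hδ)⟩
  have hPosIff : ∀ δ ∈ Φ, (¬ IsNeg δ ↔ ∀ i, 0 ≤ Zc δ i) := by
    intro δ hδ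
    rw [hNegIff δ hδ]
    constructor
    · intro h
      rcases hdich δ hδ with h' | h'
      · exact h'
      · exact absurd h' h
    · intro h h'
      exact hZne δ hδ (funext fun i => le_antisymm (h' i) (h i))
  have hZneg : ∀ δ ∈ Φ, Zc (-δ) = -Zc δ := by
    intro δ hδ
    apply hZeq
    calc -δ = -(∑ i, (Zc δ i : ℝ) • α i) := by rw [← hZspec δ (hRep δ hδ)]
      _ = ∑ i, ((-Zc δ) i : ℝ) • α i := by
          rw [← Finset.sum_neg_distrib]
          refine Finset.sum_congr rfl fun i _ => ?_
          simp [neg_smul]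
  have hNegNegIff : ∀ δ ∈ Φ, (IsNeg (-δ) ↔ ¬ IsNeg δ) := by
    intro δ hδ
    rw [hNegIff (-δ) (hnegmem δ hδ), hPosIff δ hδ, hZneg δ hδ]
    constructor
    · intro h i
      have := h i
      simp only [Pi.neg_apply] at this
      omega
    · intro h i
      have := h i
      simp only [Pi.neg_apply]
      omega
  have hZhigh : ∀ δ ∈ Φ, ∀ i, Zc δ i ≤ (a i : ℤ) :=
    fun δ hδ => hhigh δ hδ (Zc δ) (hZspec δ (hRep δ hδ))
  have hZlow : ∀ δ ∈ Φ, ∀ i, -(a i : ℤ) ≤ Zc δ i := by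
    intro δ hδ i
    have h1 := hZhigh (-δ) (hnegmem δ hδ) i
    rw [hZneg δ hδ] at h1
    simp only [Pi.neg_apply] at h1
    omega
  have hZθ : Zc θ = fun i => (a i : ℤ) := by
    apply hZeq
    rw [hθa]
    push_cast
    rfl
  have hZα : ∀ m, Zc (α m) = Pi.single m 1 := by
    intro m
    apply hZeq
    symm
    rw [Finset.sum_eq_single m]
    · simp
    · intro j _ hj
      simp [Pi.single_eq_of_ne hj]
    · simp
  -- facts about the extended system
  have hAΦ : ∀ i, A i ∈ Φ := by
    intro i
    induction i using Fin.cases with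
    | zero => rw [hA0]; exact hnegmem θ hθ
    | succ j => rw [hAs]; exact hα j
  have hAinj : Function.Injective A := by
    have hkey : ∀ j : Fin r, A 0 ≠ A j.succ := by
      intro j h
      rw [hA0, hAs] at h
      have h1 : Zc (-θ) = Zc (α j) := by rw [h]
      rw [hZneg θ hθ, hZθ, hZα] at h1
      have h2 := congrFun h1 j
      simp only [Pi.neg_apply, Pi.single_eq_same] at h2
      have := ha j
      omega
    intro i j h
    induction i using Fin.cases with
    | zero =>
      induction j using Fin.cases with
      | zero => rfl
      | succ j' => exact absurd h (hkey j')
    | succ i' =>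
      induction j using Fin.cases with
      | zero => exact absurd h.symm (hkey i')
      | succ j' =>
        rw [hAs, hAs] at h
        rw [hlin.injective h]
  have hsumA : ∑ i, (b i : ℝ) • A i = 0 := by
    rw [Fin.sum_univ_succ, hA0, hb0]
    simp only [hAs, hbs]
    rw [← hθa]
    simp
  -- expansion of integer combinations of the extended system
  have hexp : ∀ M : Fin (r + 1) → ℤ, ∑ i, (M i : ℝ) • A i
      = ∑ m, ((M m.succ : ℝ) - (M 0 : ℝ) * (a m : ℝ)) • α m := by
    intro M
    rw [Fin.sum_univ_succ, hA0, hθa]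
    simp only [hAs, smul_neg, Finset.smul_sum, smul_smul, sub_smul, Finset.sum_sub_distrib]
    abel
  -- any real relation among the A i is proportional to b
  have hrel : ∀ n : Fin (r + 1) → ℝ, ∑ j, n j • A j = 0 → ∀ i : Fin r,
      n i.succ = n 0 * (a i : ℝ) := by
    intro n h i
    rw [Fin.sum_univ_succ, hA0, hθa] at h
    simp only [hAs, smul_neg, Finset.smul_sum, smul_smul] at h
    rw [neg_add_eq_sub, sub_eq_zero] at h
    exact (congrFun (huniqR _ _ h.symm) i).symm
  -- every element of Cset induces a permutation of the A i preserving the marks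
  have htau : ∀ u : V ≃ₗ[ℝ] V, u ∈ Cset → ∃ τ : Equiv.Perm (Fin (r + 1)),
      (∀ i, u (A i) = A (τ i)) ∧ (∀ i, b (τ i) = b i) := by
    intro u hu
    rw [hC] at hu
    obtain ⟨huW, him⟩ := hu
    have hex : ∀ i, ∃ j, A j = u (A i) := by
      intro i
      have h1 : u (A i) ∈ Set.range A := by
        rw [← him]
        exact ⟨A i, ⟨i, rfl⟩, rfl⟩
      exact h1
    choose σ hσ using hex
    have hσinj : Function.Injective σ := by
      intro i j hij
      have h1 : u (A i) = u (A j) := by rw [← hσ i, ← hσ j, hij]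
      exact hAinj (u.injective h1)
    let τ : Equiv.Perm (Fin (r + 1)) :=
      Equiv.ofBijective σ (Finite.injective_iff_bijective.1 hσinj)
    have hτ : ∀ i, u (A i) = A (τ i) := fun i => (hσ i).symm
    have h0 : ∑ j, (b (τ.symm j) : ℝ) • A j = 0 := by
      rw [← Equiv.sum_comp τ (fun j => (b (τ.symm j) : ℝ) • A j)]
      simp only [Equiv.symm_apply_apply]
      calc ∑ i, (b i : ℝ) • A (τ i) = ∑ i, (b i : ℝ) • u (A i) := by
            exact Finset.sum_congr rfl fun i _ => by rw [hτ i]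
        _ = u (∑ i, (b i : ℝ) • A i) := by rw [map_sum]; simp only [map_smul]
        _ = 0 := by rw [hsumA, map_zero]
    have hm : ∀ j, b (τ.symm j) = b (τ.symm 0) * b j := by
      intro j
      induction j using Fin.cases with
      | zero => rw [hb0, mul_one]
      | succ i =>
        have h1 := hrel _ h0 i
        rw [hbs]
        exact_mod_cast h1
    have h1 : b (τ.symm 0) = 1 := by
      have h2 := hm (τ 0)
      rw [Equiv.symm_apply_apply, hb0] at h2
      exact Nat.eq_one_of_mul_eq_one_right h2.symm
    refine ⟨τ, hτ, fun i => ?_⟩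
    have h2 := hm (τ i)
    rw [Equiv.symm_apply_apply, h1, one_mul] at h2
    exact h2.symm
  -- right invariance
  have hright : ∀ u : V ≃ₗ[ℝ] V, cdes (u * c') = cdes u := by
    intro u
    obtain ⟨τ, hτ, hmark⟩ := htau c' hc'
    rw [hcdes, hcdes]
    rw [← Equiv.sum_comp τ (fun i => if IsNeg (u (A i)) then b i else 0)]
    refine Finset.sum_congr rfl fun i _ => ?_
    have happ : (u * c') (A i) = u (A (τ i)) := by
      show u (c' (A i)) = u (A (τ i))
      rw [hτ i]
    rw [happ, hmark i]
  -- left invariance setup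
  have hcW : c ∈ W := by
    rw [hC] at hc
    exact hc.1
  obtain ⟨τ, hτA, hmark⟩ := htau c hc
  set t : Fin r → ℤ := fun j => if τ j.succ = 0 then 1 else 0 with htdef
  set ν : (Fin r → ℤ) → ℤ := fun z => ∑ j, t j * z j with hνdef
  have hνneg : ∀ z : Fin r → ℤ, ν (-z) = -ν z := by
    intro z
    rw [hνdef]
    simp [Finset.sum_neg_distrib, mul_neg]
  have hF2 : ∀ j : Fin r, τ j.succ = 0 → a j = 1 := by
    intro j hj
    have h1 := hmark j.succ
    rw [hj, hb0, hbs] at h1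
    exact h1.symm
  -- the key affine-positivity transfer lemma
  have hK : ∀ γ ∈ Φ, ∀ k : ℤ, (1 ≤ k ∨ (k = 0 ∧ ¬ IsNeg γ)) →
      ((k + ν (Zc γ) = 0 ∧ ¬ IsNeg (c γ)) ∨ 1 ≤ k + ν (Zc γ)) := by
    intro γ hγ k hk
    have hcγΦ : c γ ∈ Φ := hWΦ c hcW γ hγ
    set z : Fin r → ℤ := Zc γ with hzdef
    set N : Fin (r + 1) → ℤ :=
      fun i => Fin.cases k (fun j => z j + k * (a j : ℤ)) i with hNdef
    have hN0 : N 0 = k := rfl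
    have hNs : ∀ j : Fin r, N j.succ = z j + k * (a j : ℤ) := by
      intro j
      rw [hNdef]
      simp
    have hNpos : ∀ i, 0 ≤ N i := by
      intro i
      induction i using Fin.cases with
      | zero =>
        rw [hN0]
        rcases hk with h | ⟨h, -⟩ <;> omega
      | succ j =>
        rw [hNs]
        rcases hk with h | ⟨h0, hpos⟩
        · have h1 := hZlow γ hγ j
          have h2 : (k - 1) * (a j : ℤ) = k * (a j : ℤ) - (a j : ℤ) := by ring
          have h3 : (0 : ℤ) ≤ (k - 1) * (a j : ℤ) :=
            mul_nonneg (by omega) (by exact_mod_cast Nat.zero_le (a j))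
          linarith
        · have h1 := (hPosIff γ hγ).1 hpos j
          rw [h0, hzdef]
          omega
    -- γ as a combination of the A i
    have hγN : γ = ∑ i, (N i : ℝ) • A i := by
      rw [hexp N]
      have h1 : ∀ m : Fin r, ((N m.succ : ℝ) - (N 0 : ℝ) * (a m : ℝ)) = (z m : ℝ) := by
        intro m
        rw [hNs, hN0]
        push_cast
        ring
      calc γ = ∑ m, (z m : ℝ) • α m := hZspec γ (hRep γ hγ)
        _ = ∑ m, ((N m.succ : ℝ) - (N 0 : ℝ) * (a m : ℝ)) • α m := by
            exact Finset.sum_congr rfl fun m _ => by rw [h1 m]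
    -- c γ as a combination of the A i, permuted
    have hcγ : c γ = ∑ j, (N (τ.symm j) : ℝ) • A j := by
      rw [← Equiv.sum_comp τ (fun j => (N (τ.symm j) : ℝ) • A j)]
      simp only [Equiv.symm_apply_apply]
      calc c γ = c (∑ i, (N i : ℝ) • A i) := by rw [← hγN]
        _ = ∑ i, (N i : ℝ) • c (A i) := by rw [map_sum]; simp only [map_smul]
        _ = ∑ i, (N i : ℝ) • A (τ i) := by
            exact Finset.sum_congr rfl fun i _ => by rw [hτA i]
    have hZcγ : Zc (c γ) = fun m => N (τ.symm m.succ) - N (τ.symm 0) * (a m : ℤ) := by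
      apply hZeq
      rw [hcγ, hexp (fun j => N (τ.symm j))]
      refine Finset.sum_congr rfl fun m _ => ?_
      push_cast
      ring_nf
    -- k + ν z = N (τ.symm 0)
    have hK2 : k + ν z = N (τ.symm 0) := by
      rcases Fin.eq_zero_or_eq_succ (τ.symm 0) with h0 | ⟨j₀, hj₀⟩
      · have ht0 : ∀ j, t j = 0 := by
          intro j
          rw [htdef]
          simp only
          rw [if_neg]
          intro hj
          have h1 : j.succ = τ.symm 0 := by rw [← hj, Equiv.symm_apply_apply]
          rw [h0] at h1
          exact Fin.succ_ne_zero j h1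
        have hν0 : ν z = 0 := by
          rw [hνdef]
          simp only
          rw [Finset.sum_eq_zero fun j _ => by rw [ht0 j, zero_mul]]
        rw [h0, hN0, hν0, add_zero]
      · have hτj₀ : τ j₀.succ = 0 := by rw [← hj₀, Equiv.apply_symm_apply]
        have ha1 : a j₀ = 1 := hF2 j₀ hτj₀
        have ht1 : ∀ j, t j = if j = j₀ then 1 else 0 := by
          intro j
          rw [htdef]
          simp only
          by_cases hjj : j = j₀
          · rw [hjj, if_pos hτj₀, if_pos rfl]
          · rw [if_neg, if_neg hjj]
            intro hj
            have h1 : j.succ = τ.symm 0 := by rw [← hj, Equiv.symm_apply_apply]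
            rw [hj₀] at h1
            exact hjj (Fin.succ_injective _ h1)
        have hν1 : ν z = z j₀ := by
          rw [hνdef]
          simp only
          calc ∑ j, t j * z j = ∑ j, if j = j₀ then z j else 0 := by
                refine Finset.sum_congr rfl fun j _ => ?_
                rw [ht1 j]
                by_cases hjj : j = j₀
                · rw [if_pos hjj, if_pos hjj, one_mul]
                · rw [if_neg hjj, if_neg hjj, zero_mul]
            _ = z j₀ := by rw [Finset.sum_ite_eq' Finset.univ j₀ z]; simp
        rw [hj₀, hNs, hν1, ha1]
        push_cast
        ring
    -- conclude
    by_cases hzero : k + ν z = 0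
    · left
      refine ⟨hzero, ?_⟩
      rw [hPosIff _ hcγΦ]
      intro m
      have h1 := hNpos (τ.symm m.succ)
      have h2 : N (τ.symm 0) = 0 := by omega
      rw [hZcγ]
      simp only
      rw [h2]
      omega
    · right
      have := hNpos (τ.symm 0)
      omega
  -- the indicator identity
  have hL7 : ∀ δ ∈ Φ, (if IsNeg (c δ) then (1:ℤ) else 0)
      = (if IsNeg δ then (1:ℤ) else 0) + ν (Zc δ) := by
    have hposcase : ∀ δ ∈ Φ, ¬ IsNeg δ →
        (if IsNeg (c δ) then (1:ℤ) else 0) = ν (Zc δ) := by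
      intro δ hδ hpos
      have hcδΦ : c δ ∈ Φ := hWΦ c hcW δ hδ
      have h1 := hK δ hδ 0 (Or.inr ⟨rfl, hpos⟩)
      have h2 := hK (-δ) (hnegmem δ hδ) 1 (Or.inl le_rfl)
      rw [hZneg δ hδ, hνneg, map_neg] at h2
      have hnn := hNegNegIff (c δ) hcδΦ
      rcases h1 with ⟨he, hp⟩ | hge
      · rw [if_neg hp]
        omega
      · rcases h2 with ⟨he2, hp2⟩ | hge2
        · have hcneg : IsNeg (c δ) := by
            by_contra hx
            exact hp2 (hnn.2 hx)
          rw [if_pos hcneg]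
          omega
        · exfalso
          omega
    intro δ hδ
    by_cases hneg : IsNeg δ
    · have hδ' := hnegmem δ hδ
      have hpos' : ¬ IsNeg (-δ) := by
        rw [hNegNegIff δ hδ]
        exact not_not_intro hneg
      have h3 := hposcase (-δ) hδ' hpos'
      rw [hZneg δ hδ, hνneg, map_neg] at h3
      have hnn := hNegNegIff (c δ) (hWΦ c hcW δ hδ)
      rw [if_pos hneg]
      by_cases hc2 : IsNeg (c δ)
      · rw [if_pos hc2]
        rw [if_neg (fun hx => (hnn.1 hx) hc2)] at h3
        omega
      · rw [if_neg hc2]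
        rw [if_pos (hnn.2 hc2)] at h3
        omega
    · rw [if_neg hneg, hposcase δ hδ hneg, zero_add]
  -- left invariance
  have hleft : cdes (c * w) = cdes w := by
    have hβ : ∀ i, w (A i) ∈ Φ := fun i => hWΦ w hw (A i) (hAΦ i)
    -- the weighted coefficient sums vanish
    have hzsum : ∀ j : Fin r, ∑ i, (b i : ℤ) * Zc (w (A i)) j = 0 := by
      intro j
      have h0 : ∑ i, (b i : ℝ) • w (A i) = 0 := by
        calc ∑ i, (b i : ℝ) • w (A i) = w (∑ i, (b i : ℝ) • A i) := by
              rw [map_sum]; simp only [map_smul]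
          _ = 0 := by rw [hsumA, map_zero]
      have h2 : ∑ jj, (∑ i, (b i : ℝ) * (Zc (w (A i)) jj : ℝ)) • α jj = 0 := by
        calc ∑ jj, (∑ i, (b i : ℝ) * (Zc (w (A i)) jj : ℝ)) • α jj
            = ∑ jj, ∑ i, ((b i : ℝ) * (Zc (w (A i)) jj : ℝ)) • α jj := by
              exact Finset.sum_congr rfl fun jj _ => Finset.sum_smul
          _ = ∑ i, ∑ jj, ((b i : ℝ) * (Zc (w (A i)) jj : ℝ)) • α jj := Finset.sum_comm
          _ = ∑ i, (b i : ℝ) • w (A i) := by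
              refine Finset.sum_congr rfl fun i _ => ?_
              conv_rhs => rw [hZspec (w (A i)) (hRep _ (hβ i))]
              rw [Finset.smul_sum]
              exact Finset.sum_congr rfl fun jj _ => (smul_smul _ _ _).symm
          _ = 0 := h0
      have h3 := Fintype.linearIndependent_iff.1 hlin _ h2 j
      exact_mod_cast h3
    -- the ν-weighted sum vanishes
    have hν0 : ∑ i, (b i : ℤ) * ν (Zc (w (A i))) = 0 := by
      rw [hνdef]
      simp only [Finset.mul_sum]
      rw [Finset.sum_comm]
      refine Finset.sum_eq_zero fun j _ => ?_
      calc ∑ i, (b i : ℤ) * (t j * Zc (w (A i)) j)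
          = t j * ∑ i, (b i : ℤ) * Zc (w (A i)) j := by
            rw [Finset.mul_sum]
            exact Finset.sum_congr rfl fun i _ => by ring
        _ = 0 := by rw [hzsum j, mul_zero]
    -- conclude over ℤ
    have hmain : (∑ i, if IsNeg (c (w (A i))) then (b i : ℤ) else 0)
        = ∑ i, if IsNeg (w (A i)) then (b i : ℤ) else 0 := by
      have hstep : ∀ i, (if IsNeg (c (w (A i))) then (b i : ℤ) else 0)
          = (if IsNeg (w (A i)) then (b i : ℤ) else 0) + (b i : ℤ) * ν (Zc (w (A i))) := by
        intro i
        have h4 := hL7 (w (A i)) (hβ i)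
        have e1 : (if IsNeg (c (w (A i))) then (b i : ℤ) else 0)
            = (b i : ℤ) * (if IsNeg (c (w (A i))) then (1:ℤ) else 0) := by
          rw [mul_ite, mul_one, mul_zero]
        have e2 : (if IsNeg (w (A i)) then (b i : ℤ) else 0)
            = (b i : ℤ) * (if IsNeg (w (A i)) then (1:ℤ) else 0) := by
          rw [mul_ite, mul_one, mul_zero]
        rw [e1, e2, h4, mul_add]
      rw [Finset.sum_congr rfl fun i _ => hstep i, Finset.sum_add_distrib, hν0, add_zero]
    rw [hcdes, hcdes]
    have hcast : ∀ i, (c * w) (A i) = c (w (A i)) := fun i => rfl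
    have hfin : ((∑ i, if IsNeg ((c * w) (A i)) then b i else 0 : ℕ) : ℤ)
        = ((∑ i, if IsNeg (w (A i)) then b i else 0 : ℕ) : ℤ) := by
      push_cast
      simp only [apply_ite (fun n : ℕ => (n : ℤ)), Nat.cast_zero, hcast]
      exact hmain
    exact_mod_cast hfin
  calc cdes (c * w * c') = cdes (c * w) := hright (c * w)
    _ = cdes w := hleft
end

section
/- The generating function for the normalized volumes of the slices of the unit cube [0,1]^r by the hyperplanes x_1+⋯+x_r = k equals the Eulerian polynomial: Σ_{k=1}^{r} Vol_N([0,1]^r ∩ {k−1 ≤ x_1+⋯+x_r ≤ k}) q^k = A_r(q), where Vol_N denotes r! times Euclidean volume. -/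
/-!
For `x` in the cube put `sᵢ = x₀ + ⋯ + xᵢ` and `yᵢ = fract sᵢ` (Stanley's map). Since every
`xᵢ` lies in `[0, 1]`, the floor `⌊sᵢ⌋` goes up by one exactly at the descents of `y`, so `⌊∑ x⌋`
is the number of descents of `y`. Conversely, where `y` has the relative order of a permutation
`w`, the map `x ↦ y` is the partial-sum map, which is unimodular, followed by a translation by
the cumulative descent counts of `w`. Up to a null set, the `k`-th slice is therefore the disjoint
union, over the permutations `w` with `k - 1` descents, of preimages of the simplices
`{y ∈ (0,1)ʳ | y has the relative order of w}`, and each of these has volume `1 / r!`.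
-/

open MeasureTheory Polynomial Finset
open scoped ENNReal

theorem floor_add_eq_of_fract_ne {R : Type*} [CommRing R] [LinearOrder R]
    [IsStrictOrderedRing R] [FloorRing R] {a x : R} (hx : x ∈ Set.Icc 0 1)
    (h : Int.fract (a + x) ≠ Int.fract a) :
    ⌊a + x⌋ = ⌊a⌋ + if Int.fract (a + x) < Int.fract a then 1 else 0 := by
  obtain ⟨hx₀, hx₁⟩ := hx
  have hk : ((⌊a + x⌋ - ⌊a⌋ : ℤ) : R) = x + Int.fract a - Int.fract (a + x) := by
    rw [Int.fract, Int.fract]; push_cast; ring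
  have := Int.fract_nonneg a; have := Int.fract_lt_one a
  have := Int.fract_nonneg (a + x); have := Int.fract_lt_one (a + x)
  split_ifs with hlt
  · have h₀ : (0 : ℤ) < ⌊a + x⌋ - ⌊a⌋ := by
      exact_mod_cast (show (0 : R) < ((⌊a + x⌋ - ⌊a⌋ : ℤ) : R) by linarith)
    have h₂ : ⌊a + x⌋ - ⌊a⌋ < 2 := by
      exact_mod_cast (show ((⌊a + x⌋ - ⌊a⌋ : ℤ) : R) < 2 by linarith)
    omega
  · have hgt : Int.fract a < Int.fract (a + x) := (not_lt.1 hlt).lt_of_ne' h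
    have h₀ : (-1 : ℤ) < ⌊a + x⌋ - ⌊a⌋ := by
      exact_mod_cast (show (-1 : R) < ((⌊a + x⌋ - ⌊a⌋ : ℤ) : R) by linarith)
    have h₁ : ⌊a + x⌋ - ⌊a⌋ < 1 := by
      exact_mod_cast (show ((⌊a + x⌋ - ⌊a⌋ : ℤ) : R) < 1 by linarith)
    omega

namespace HypersimplexVolume

section Descents

variable {α : Type*} [LinearOrder α] {n : ℕ}

def numDescents (f : Fin (n + 1) → α) : ℕ := #{j : Fin n | f j.succ < f j.castSucc}

theorem numDescents_le (f : Fin (n + 1) → α) : numDescents f ≤ n :=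
  (card_filter_le _ _).trans_eq (card_fin n)

theorem natCard_adjacentDescents_eq_numDescents (f : Fin (n + 1) → α) :
    Nat.card {p : Fin (n + 1) × Fin (n + 1) // (p.2 : ℕ) = p.1 + 1 ∧ f p.2 < f p.1} =
      numDescents f := by
  classical
  rw [Nat.card_eq_fintype_card, Fintype.card_subtype, numDescents]
  symm
  refine card_bij (fun j _ => (j.castSucc, j.succ)) ?_ ?_ ?_
  · intro j hj
    simpa using hj
  · intro i _ j _ hij
    simpa using hij
  · rintro ⟨p₁, p₂⟩ hp
    simp only [mem_filter, mem_univ, true_and] at hp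
    obtain ⟨hp₂, hlt⟩ := hp
    have hp₁ : (p₁ : ℕ) < n := by omega
    refine ⟨⟨p₁, hp₁⟩, ?_, ?_⟩
    · have : (⟨p₁, hp₁⟩ : Fin n).succ = p₂ := Fin.ext (by simp [hp₂])
      simpa [this] using hlt
    · ext <;> simp [hp₂]

def descentIndicator (f : Fin (n + 1) → α) : Fin (n + 1) → ℤ :=
  Fin.cons 0 fun j => if f j.succ < f j.castSucc then 1 else 0

@[simp] theorem descentIndicator_zero (f : Fin (n + 1) → α) : descentIndicator f 0 = 0 := rfl

@[simp] theorem descentIndicator_succ (f : Fin (n + 1) → α) (j : Fin n) :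
    descentIndicator f j.succ = if f j.succ < f j.castSucc then 1 else 0 := rfl

theorem sum_descentIndicator (f : Fin (n + 1) → α) :
    ∑ i, descentIndicator f i = numDescents f := by
  simp [Fin.sum_univ_succ, numDescents]

end Descents

section CumSum

variable {M : Type*} [AddCommMonoid M] {m n : ℕ}

def cumSum (x : Fin m → M) (i : Fin m) : M := ∑ j ∈ Iic i, x j

@[simp] theorem cumSum_zero (x : Fin (n + 1) → M) : cumSum x 0 = x 0 := by
  rw [cumSum, ← bot_eq_zero, Iic_bot, sum_singleton]

theorem cumSum_succ (x : Fin (n + 1) → M) (j : Fin n) :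
    cumSum x j.succ = cumSum x j.castSucc + x j.succ := by
  have : Iic j.succ = insert j.succ (Iic j.castSucc) := by
    ext i
    simp only [mem_Iic, mem_insert, Fin.le_def, Fin.ext_iff, Fin.val_succ, Fin.val_castSucc]
    omega
  rw [cumSum, cumSum, this, sum_insert (by simp [Fin.le_def]), add_comm]

theorem cumSum_last (x : Fin (n + 1) → M) : cumSum x (Fin.last n) = ∑ i, x i := by
  rw [cumSum, ← Fin.top_eq_last, Iic_top]

end CumSum

theorem measurePreserving_cumSum {m : ℕ} :
    MeasurePreserving (cumSum : (Fin m → ℝ) → Fin m → ℝ) := by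
  set A : Matrix (Fin m) (Fin m) ℝ := Matrix.of fun i j => if j ≤ i then 1 else 0
  have hdet : LinearMap.det (Matrix.toLin' A) = 1 := by
    rw [LinearMap.det_toLin', Matrix.det_of_isLowerTriangular A fun i j hij => if_neg hij.not_ge]
    simp [A]
  have hfun : (cumSum : (Fin m → ℝ) → Fin m → ℝ) = Matrix.toLin' A := by
    ext x i
    simp [A, Matrix.mulVec, dotProduct, cumSum, ← Finset.sum_filter, Finset.filter_ge_eq_Iic]
  refine ⟨by rw [hfun]; exact (Matrix.toLin' A).continuous_of_finiteDimensional.measurable, ?_⟩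
  rw [hfun, Measure.map_linearMap_addHaar_eq_smul_addHaar _ (by rw [hdet]; norm_num), hdet]
  simp

theorem ae_apply_notMem_of_countable {E : Type*} [NormedAddCommGroup E] [NormedSpace ℝ E]
    [MeasurableSpace E] [BorelSpace E] [FiniteDimensional ℝ E] (μ : Measure E)
    [μ.IsAddHaarMeasure] {ℓ : E →ₗ[ℝ] ℝ} (hℓ : ℓ ≠ 0) {s : Set ℝ} (hs : s.Countable) :
    ∀ᵐ x ∂μ, ℓ x ∉ s :=
  (ae_comp_linearMap_mem_iff ℓ μ volume (LinearMap.surjective_of_ne_zero hℓ)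
    hs.measurableSet.compl).2 (compl_mem_ae_iff.2 (hs.measure_zero volume))

theorem ae_injective_fract_and_ne_zero {ι : Type*} [Fintype ι] :
    ∀ᵐ y : ι → ℝ,
      Function.Injective (fun i => Int.fract (y i)) ∧ ∀ i, Int.fract (y i) ≠ 0 := by
  classical
  have hint : (Set.range ((↑) : ℤ → ℝ)).Countable := Set.countable_range _
  have hpair : ∀ᵐ y : ι → ℝ, ∀ i j, i ≠ j → y i - y j ∉ Set.range ((↑) : ℤ → ℝ) := by
    refine ae_all_iff.2 fun i => ae_all_iff.2 fun j => ?_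
    by_cases hij : i = j
    · exact Filter.Eventually.of_forall fun _ h => (h hij).elim
    have hℓ : (LinearMap.proj i : (ι → ℝ) →ₗ[ℝ] ℝ) - LinearMap.proj j ≠ 0 := fun h => by
      simpa [Pi.single_apply, hij] using LinearMap.congr_fun h (Pi.single i 1)
    filter_upwards [ae_apply_notMem_of_countable volume hℓ hint] with y hy _ using hy
  have hsingle : ∀ᵐ y : ι → ℝ, ∀ i, y i ∉ Set.range ((↑) : ℤ → ℝ) := by
    refine ae_all_iff.2 fun i => ?_
    have hℓ : (LinearMap.proj i : (ι → ℝ) →ₗ[ℝ] ℝ) ≠ 0 := fun h => by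
      simpa using LinearMap.congr_fun h (Pi.single i 1)
    exact ae_apply_notMem_of_countable volume hℓ hint
  filter_upwards [hpair, hsingle] with y hpair hsingle
  refine ⟨fun i j hij => ?_, fun i hi => hsingle i ?_⟩
  · by_contra hne
    obtain ⟨z, hz⟩ := Int.fract_eq_fract.1 hij
    exact hpair i j hne ⟨z, hz.symm⟩
  · obtain ⟨z, hz⟩ := Int.fract_eq_iff.1 hi |>.2.2
    exact ⟨z, by simpa using hz.symm⟩

section OrderCell

variable {α : Type*} [LinearOrder α] {m : ℕ}

def orderCell (w : Equiv.Perm (Fin m)) : Set (Fin m → α) :=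
  {y | ∀ a b, w a < w b → y a < y b}

variable {w w' : Equiv.Perm (Fin m)} {y : Fin m → α}

theorem lt_iff_of_mem_orderCell (hy : y ∈ orderCell w) (a b : Fin m) :
    y a < y b ↔ w a < w b := by
  refine ⟨fun h => ?_, hy a b⟩
  by_contra hab
  rcases (not_lt.1 hab).lt_or_eq with hlt | heq
  · exact (hy b a hlt).asymm h
  · exact (w.injective heq ▸ h).false

theorem injective_of_mem_orderCell (hy : y ∈ orderCell w) : Function.Injective y := by
  intro a b hab
  by_contra hne
  rcases lt_or_gt_of_ne (w.injective.ne hne) with hlt | hlt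
  · exact (hy a b hlt).ne hab
  · exact (hy b a hlt).ne hab.symm

theorem exists_mem_orderCell (hy : Function.Injective y) : ∃ w, y ∈ orderCell w := by
  have hmono : StrictMono (y ∘ Tuple.sort y) :=
    (Tuple.monotone_sort y).strictMono_of_injective (hy.comp (Tuple.sort y).injective)
  exact ⟨(Tuple.sort y)⁻¹, fun a b hab => by simpa using hmono hab⟩

theorem eq_of_mem_orderCell (hw : y ∈ orderCell w) (hw' : y ∈ orderCell w') : w = w' := by
  have hmono : StrictMono (w'.symm.trans w) := fun c d hcd => by
    rw [Equiv.trans_apply, Equiv.trans_apply, ← lt_iff_of_mem_orderCell hw,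
      lt_iff_of_mem_orderCell hw']
    simpa using hcd
  ext1 a
  simpa using congrFun hmono.eq_id (w' a)

theorem descentIndicator_eq_of_mem_orderCell {n : ℕ} {w : Equiv.Perm (Fin (n + 1))}
    {y : Fin (n + 1) → α} (hy : y ∈ orderCell w) : descentIndicator y = descentIndicator w := by
  ext i
  cases i using Fin.cases <;> simp [lt_iff_of_mem_orderCell hy]

theorem numDescents_eq_of_mem_orderCell {n : ℕ} {w : Equiv.Perm (Fin (n + 1))}
    {y : Fin (n + 1) → α} (hy : y ∈ orderCell w) : numDescents y = numDescents w := by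
  simp [numDescents, lt_iff_of_mem_orderCell hy]

end OrderCell

section OrderCellVolume

variable {m : ℕ}

theorem measurableSet_orderCell (w : Equiv.Perm (Fin m)) :
    MeasurableSet (orderCell w : Set (Fin m → ℝ)) := by
  simp only [orderCell, Set.ofPred_forall]
  exact .iInter fun a => .iInter fun b => .iInter fun _ =>
    measurableSet_lt (measurable_pi_apply a) (measurable_pi_apply b)

theorem volume_pi_inter_orderCell_eq_orderCell_one {s : Set ℝ} (hs : MeasurableSet s)
    (w : Equiv.Perm (Fin m)) :
    volume (Set.univ.pi (fun _ => s) ∩ orderCell w) =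
      volume (Set.univ.pi (fun _ => s) ∩ orderCell (1 : Equiv.Perm (Fin m))) := by
  have hpre : MeasurableEquiv.piCongrLeft (fun _ => ℝ) w ⁻¹'
      (Set.univ.pi (fun _ => s) ∩ orderCell 1) = Set.univ.pi (fun _ => s) ∩ orderCell w := by
    ext y
    simp only [Set.mem_preimage, Set.mem_inter_iff, Set.mem_univ_pi, orderCell, Set.mem_ofPred_eq,
      MeasurableEquiv.coe_piCongrLeft, Equiv.piCongrLeft_apply_eq_cast, cast_eq,
      Equiv.Perm.coe_one, id]
    refine and_congr (w.forall_congr_left (p := fun i => y i ∈ s)).symm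
      ⟨fun h a b hab => ?_, fun h a b hab => ?_⟩
    · simpa using h (w a) (w b) hab
    · exact h _ _ (by simpa using hab)
  rw [← hpre, (volume_measurePreserving_piCongrLeft (fun _ => ℝ) w).measure_preimage]
  exact ((MeasurableSet.univ_pi fun _ => hs).inter (measurableSet_orderCell 1)).nullMeasurableSet

theorem volume_cube_inter_orderCell (w : Equiv.Perm (Fin m)) :
    volume (Set.univ.pi (fun _ => Set.Ioo (0 : ℝ) 1) ∩ orderCell w) =
      (m.factorial : ℝ≥0∞)⁻¹ := by
  set Q : Set (Fin m → ℝ) := Set.univ.pi fun _ => Set.Ioo 0 1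
  have hmeas : ∀ w : Equiv.Perm (Fin m), MeasurableSet (Q ∩ orderCell w) := fun w =>
    (MeasurableSet.univ_pi fun _ => measurableSet_Ioo).inter (measurableSet_orderCell w)
  have hdisj : Pairwise (Function.onFun Disjoint fun w : Equiv.Perm (Fin m) => Q ∩ orderCell w) :=
    fun w w' hne => Set.disjoint_left.2 fun y hy hy' => hne (eq_of_mem_orderCell hy.2 hy'.2)
  have hcover : volume (⋃ w, Q ∩ orderCell w) = 1 := by
    refine le_antisymm ((measure_mono (Set.iUnion_subset fun w => Set.inter_subset_left)).trans
      (by simp [Q, Real.volume_pi_Ioo])) ?_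
    calc 1 = volume Q := by simp [Q, Real.volume_pi_Ioo]
      _ ≤ volume (⋃ w, Q ∩ orderCell w) := measure_mono_ae <| by
        filter_upwards [ae_injective_fract_and_ne_zero] with y hy hyQ
        obtain ⟨w, hw⟩ :=
          exists_mem_orderCell (Function.Injective.of_comp (f := Int.fract) hy.1)
        exact Set.mem_iUnion.2 ⟨w, hyQ, hw⟩
  rw [measure_iUnion hdisj hmeas, tsum_fintype,
    sum_congr rfl fun w _ => volume_pi_inter_orderCell_eq_orderCell_one measurableSet_Ioo w,
    sum_const, card_univ, Fintype.card_perm, Fintype.card_fin, nsmul_eq_mul] at hcover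
  rw [volume_pi_inter_orderCell_eq_orderCell_one measurableSet_Ioo w]
  exact ENNReal.eq_inv_of_mul_eq_one_left (by rwa [mul_comm])

end OrderCellVolume

section StanleyPieces

variable {n : ℕ}

def stanleyPiece (w : Equiv.Perm (Fin (n + 1))) : Set (Fin (n + 1) → ℝ) :=
  (fun x => cumSum x - fun i => ((cumSum (descentIndicator w) i : ℤ) : ℝ)) ⁻¹'
    (Set.univ.pi (fun _ => Set.Ioo 0 1) ∩ orderCell w)

theorem volume_stanleyPiece (w : Equiv.Perm (Fin (n + 1))) :
    volume (stanleyPiece w) = ((n + 1).factorial : ℝ≥0∞)⁻¹ := by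
  rw [stanleyPiece, ← Function.comp_def (fun y => y - _) cumSum,
    ((measurePreserving_sub_right volume _).comp measurePreserving_cumSum).measure_preimage
      ((MeasurableSet.univ_pi fun _ => measurableSet_Ioo).inter
        (measurableSet_orderCell w)).nullMeasurableSet,
    volume_cube_inter_orderCell]

theorem measurableSet_stanleyPiece (w : Equiv.Perm (Fin (n + 1))) :
    MeasurableSet (stanleyPiece w) :=
  (measurePreserving_cumSum.measurable.sub_const _)
    ((MeasurableSet.univ_pi fun _ => measurableSet_Ioo).inter (measurableSet_orderCell w))

theorem mem_stanleyPiece_iff {w : Equiv.Perm (Fin (n + 1))} {x : Fin (n + 1) → ℝ} :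
    x ∈ stanleyPiece w ↔ (∀ i, ⌊cumSum x i⌋ = cumSum (descentIndicator w) i) ∧
      (fun i => Int.fract (cumSum x i)) ∈ Set.univ.pi (fun _ => Set.Ioo 0 1) ∩ orderCell w := by
  have hfract (h : ∀ i, ⌊cumSum x i⌋ = cumSum (descentIndicator w) i) :
      (fun i => Int.fract (cumSum x i)) =
        cumSum x - fun i => ((cumSum (descentIndicator w) i : ℤ) : ℝ) := by
    ext i; rw [← Int.self_sub_floor, h]; rfl
  refine ⟨fun hx => ?_, fun ⟨hfloor, hy⟩ => ?_⟩
  · have hfloor : ∀ i, ⌊cumSum x i⌋ = cumSum (descentIndicator w) i := fun i => by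
      have := hx.1 i trivial
      simp only [Pi.sub_apply, Set.mem_Ioo] at this
      exact Int.floor_eq_iff.2 ⟨by linarith, by linarith⟩
    exact ⟨hfloor, hfract hfloor ▸ hx⟩
  · rw [stanleyPiece, Set.mem_preimage, ← hfract hfloor]
    exact hy

theorem pairwiseDisjoint_stanleyPiece (s : Set (Equiv.Perm (Fin (n + 1)))) :
    s.PairwiseDisjoint stanleyPiece := fun _ _ _ _ hne =>
  Set.disjoint_left.2 fun _ hx hx' =>
    hne (eq_of_mem_orderCell (mem_stanleyPiece_iff.1 hx).2.2 (mem_stanleyPiece_iff.1 hx').2.2)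

theorem floor_cumSum_eq_cumSum_descentIndicator {x : Fin (n + 1) → ℝ}
    (hx : ∀ i, x i ∈ Set.Icc 0 1)
    (hinj : Function.Injective fun i => Int.fract (cumSum x i))
    (hne : ∀ i, Int.fract (cumSum x i) ≠ 0) (i : Fin (n + 1)) :
    ⌊cumSum x i⌋ = cumSum (descentIndicator fun i => Int.fract (cumSum x i)) i := by
  induction i using Fin.induction with
  | zero =>
    have hx1 : x 0 ≠ 1 := fun h => hne 0 (by simp [h])
    simpa [Int.floor_eq_zero_iff] using ⟨(hx 0).1, lt_of_le_of_ne (hx 0).2 hx1⟩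
  | succ j ih =>
    have hstep := (Fin.castSucc_lt_succ (i := j)).ne
    rw [cumSum_succ, cumSum_succ, floor_add_eq_of_fract_ne (hx _)
      (by rw [← cumSum_succ]; exact fun h => hstep (hinj h).symm), ih, descentIndicator_succ,
      cumSum_succ]

theorem exists_mem_stanleyPiece {x : Fin (n + 1) → ℝ} (hx : ∀ i, x i ∈ Set.Icc 0 1)
    (hinj : Function.Injective fun i => Int.fract (cumSum x i))
    (hne : ∀ i, Int.fract (cumSum x i) ≠ 0) : ∃ w, x ∈ stanleyPiece w := by
  obtain ⟨w, hw⟩ := exists_mem_orderCell hinj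
  refine ⟨w, mem_stanleyPiece_iff.2 ⟨fun i => ?_, fun i _ => ?_, hw⟩⟩
  · rw [floor_cumSum_eq_cumSum_descentIndicator hx hinj hne,
      descentIndicator_eq_of_mem_orderCell hw]
  · exact ⟨(Int.fract_nonneg _).lt_of_ne (hne i).symm, Int.fract_lt_one _⟩

theorem mem_Ioo_of_mem_stanleyPiece {w : Equiv.Perm (Fin (n + 1))} {x : Fin (n + 1) → ℝ}
    (hx : x ∈ stanleyPiece w) :
    (∀ i, x i ∈ Set.Ioo 0 1) ∧ ∑ i, x i - numDescents w ∈ Set.Ioo 0 1 := by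
  set y := cumSum x - fun i => ((cumSum (descentIndicator w) i : ℤ) : ℝ)
  have hcube : ∀ i, y i ∈ Set.Ioo 0 1 := fun i => hx.1 i trivial
  have hcell : y ∈ orderCell w := hx.2
  have hy : ∀ i, cumSum x i = y i + (cumSum (descentIndicator y) i : ℤ) := fun i => by
    simp [y, descentIndicator_eq_of_mem_orderCell hcell]
  refine ⟨fun i => ?_, ?_⟩
  · cases i using Fin.cases with
    | zero => rw [← cumSum_zero x, hy]; simpa using hcube 0
    | succ j =>
      have hxj : x j.succ = y j.succ - y j.castSucc + descentIndicator y j.succ := by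
        have := hy j.succ
        rw [cumSum_succ, cumSum_succ, hy, Int.cast_add] at this
        linarith
      have h₁ := hcube j.succ
      have h₂ := hcube j.castSucc
      rw [hxj, descentIndicator_succ]
      simp only [Set.mem_Ioo] at h₁ h₂ ⊢
      split_ifs with hlt
      · push_cast; constructor <;> linarith
      · have hgt := lt_of_le_of_ne (not_lt.1 hlt)
          ((injective_of_mem_orderCell hcell).ne Fin.castSucc_lt_succ.ne)
        push_cast; constructor <;> linarith
  · rw [← cumSum_last, hy, cumSum_last, sum_descentIndicator,
      numDescents_eq_of_mem_orderCell hcell, Int.cast_natCast, add_sub_cancel_right]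
    exact hcube _

end StanleyPieces

theorem volume_cube_slice (n k : ℕ) :
    volume {x : Fin (n + 1) → ℝ | (∀ i, x i ∈ Set.Icc (0 : ℝ) 1) ∧
      (k : ℝ) - 1 ≤ ∑ i, x i ∧ ∑ i, x i ≤ (k : ℝ)} =
      #{w : Equiv.Perm (Fin (n + 1)) | numDescents w + 1 = k} / ((n + 1).factorial : ℝ≥0∞) := by
  set F := ({w | numDescents w + 1 = k} : Finset (Equiv.Perm (Fin (n + 1))))
  have hpieces : volume (⋃ w ∈ F, stanleyPiece w) = #F / ((n + 1).factorial : ℝ≥0∞) := by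
    rw [measure_biUnion_finset (pairwiseDisjoint_stanleyPiece _)
      fun w _ => measurableSet_stanleyPiece w]
    simp [volume_stanleyPiece, div_eq_mul_inv]
  rw [← hpieces]
  refine le_antisymm (measure_mono_ae ?_)
    (measure_mono (Set.iUnion₂_subset fun w hw x hx => ?_))
  · filter_upwards
      [measurePreserving_cumSum.quasiMeasurePreserving.ae ae_injective_fract_and_ne_zero]
      with x ⟨hinj, hne⟩ ⟨hx, hk₁, hk₂⟩
    obtain ⟨w, hw⟩ := exists_mem_stanleyPiece hx hinj hne
    obtain ⟨hd₁, hd₂⟩ := (mem_Ioo_of_mem_stanleyPiece hw).2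
    have h₁ : (numDescents w : ℝ) < k := by linarith
    have h₂ : (k : ℝ) < numDescents w + 2 := by linarith
    norm_cast at h₁ h₂
    exact Set.mem_biUnion (mem_filter.2 ⟨mem_univ w, by omega⟩) hw
  · obtain ⟨hcube, hd₁, hd₂⟩ := mem_Ioo_of_mem_stanleyPiece hx
    have hk : ((numDescents w : ℕ) : ℝ) + 1 = k := by exact_mod_cast (mem_filter.1 hw).2
    exact ⟨fun i => Set.Ioo_subset_Icc_self (hcube i), by linarith, by linarith⟩

theorem sum_X_pow_eq_sum_card_mul {β : Type*} [Fintype β] (f : β → ℕ) {s : Finset ℕ}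
    (hf : ∀ b, f b ∈ s) :
    ∑ b, (X : ℝ[X]) ^ f b = ∑ k ∈ s, (#{b | f b = k} : ℝ[X]) * X ^ k := by
  rw [← sum_fiberwise_of_maps_to' (fun b _ => hf b)]
  simp [nsmul_eq_mul]

end HypersimplexVolume

/-- The generating function for the normalized volumes (`r!` times Euclidean volume) of the
slices of the unit cube `[0,1]^r` by the hyperplanes `x_1 + ⋯ + x_r = k` equals the
Eulerian polynomial `A_r(q) = ∑_{w ∈ S_r} q^{des(w)+1}`. -/
theorem stmt_13 (r : ℕ) (hr : 1 ≤ r)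
    (des : Equiv.Perm (Fin r) → ℕ)
    (hdes : ∀ w, des w = Nat.card {p : Fin r × Fin r //
      (p.2 : ℕ) = (p.1 : ℕ) + 1 ∧ w p.2 < w p.1}) :
    ∑ k ∈ Finset.Icc 1 r, (C ((r.factorial : ℝ) *
        (volume {x : Fin r → ℝ | (∀ i, x i ∈ Set.Icc (0 : ℝ) 1) ∧
          (k : ℝ) - 1 ≤ ∑ i, x i ∧ ∑ i, x i ≤ (k : ℝ)}).toReal) * X ^ k)
      = ∑ w : Equiv.Perm (Fin r), (X : ℝ[X]) ^ (des w + 1) := by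
  obtain ⟨n, rfl⟩ : ∃ n, r = n + 1 := ⟨r - 1, by omega⟩
  have hdes' : ∀ w, des w = HypersimplexVolume.numDescents w := fun w =>
    (hdes w).trans (HypersimplexVolume.natCard_adjacentDescents_eq_numDescents w)
  rw [HypersimplexVolume.sum_X_pow_eq_sum_card_mul _ fun w => mem_Icc.2 ⟨Nat.le_add_left 1 _,
    Nat.add_le_add_right ((hdes' w).trans_le (HypersimplexVolume.numDescents_le w)) 1⟩]
  refine sum_congr rfl fun k _ => ?_
  have hfac : ((n + 1).factorial : ℝ) ≠ 0 := by positivity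
  simp only [HypersimplexVolume.volume_cube_slice, hdes', ENNReal.toReal_div,
    ENNReal.toReal_natCast, mul_div_cancel₀ _ hfac, C_eq_natCast]
end
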